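/- Let $x : [0,T] \to [0,\infty)$ be a $C^1$ function, $m \ge 1$ an integer, and $M > 0$. Suppose that for all $t \in [0,T]$, if $x(t) \ge M$ then $x'(t) \le -(2m-1)\, x(t)^{2m/(2m-1)}$. Then for all $t \in (0,T]$, $x(t) \le \max(M, t^{-(2m-1)})$. -/

import Mathlib

/-!
Where `x ≥ M` the substitution `y = x ^ (-1/a)`, `a = 2m - 1`, turns the differential inequality
into `y' ≥ 1`, so `y` grows at least as fast as the time variable. If `x ≥ M` on all of `[0, t]`
this gives `x(t) ^ (-1/a) ≥ t`, i.e. `x(t) ≤ t ^ (-a)`. Otherwise `x` crosses the level `M` a last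
time `τ < t`, and the same growth on `[τ, t]` forbids `x(t) > M`.
-/

open Set Real

lemma one_le_mul_rpow_of_le_neg_mul_rpow {a y y' : ℝ} (ha : 0 < a) (hy : 0 < y)
    (h : y' ≤ -a * y ^ ((a + 1) / a)) : 1 ≤ y' * (-a)⁻¹ * y ^ ((-a)⁻¹ - 1) := by
  have hexp : (a + 1) / a + ((-a)⁻¹ - 1) = 0 := by field_simp; ring
  rw [mul_assoc]
  calc 1 = -a * y ^ ((a + 1) / a) * ((-a)⁻¹ * y ^ ((-a)⁻¹ - 1)) := by
        rw [mul_mul_mul_comm, mul_inv_cancel₀ (neg_ne_zero.2 ha.ne'), one_mul, ← rpow_add hy,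
          hexp, rpow_zero]
    _ ≤ y' * ((-a)⁻¹ * y ^ ((-a)⁻¹ - 1)) :=
        mul_le_mul_of_nonpos_right h
          (mul_nonpos_of_nonpos_of_nonneg (by simp [ha.le]) (by positivity))

theorem rpow_neg_inv_add_sub_le {a σ τ : ℝ} {x x' : ℝ → ℝ} (ha : 0 < a) (hστ : σ ≤ τ)
    (hcont : ContinuousOn x (Icc σ τ)) (hpos : ∀ s ∈ Icc σ τ, 0 < x s)
    (hderiv : ∀ s ∈ Ioo σ τ, HasDerivAt x (x' s) s)
    (hode : ∀ s ∈ Ioo σ τ, x' s ≤ -a * x s ^ ((a + 1) / a)) :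
    x σ ^ (-a)⁻¹ + (τ - σ) ≤ x τ ^ (-a)⁻¹ := by
  have hderiv_rpow (s : ℝ) (hs : s ∈ Ioo σ τ) :
      HasDerivAt (fun u => x u ^ (-a)⁻¹) (x' s * (-a)⁻¹ * x s ^ ((-a)⁻¹ - 1)) s :=
    (hderiv s hs).rpow_const (Or.inl (hpos s (Ioo_subset_Icc_self hs)).ne')
  have hgrowth := (convex_Icc σ τ).mul_sub_le_image_sub_of_le_deriv (C := 1)
    (hcont.rpow_const fun s hs => Or.inl (hpos s hs).ne')
    (fun s hs => by
      rw [interior_Icc] at hs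
      exact (hderiv_rpow s hs).differentiableAt.differentiableWithinAt)
    (fun s hs => by
      rw [interior_Icc] at hs
      rw [(hderiv_rpow s hs).deriv]
      exact one_le_mul_rpow_of_le_neg_mul_rpow ha (hpos s (Ioo_subset_Icc_self hs)) (hode s hs))
    σ (left_mem_Icc.2 hστ) τ (right_mem_Icc.2 hστ) hστ
  linarith

theorem ContinuousOn.exists_eq_forall_lt_of_le_of_lt {f : ℝ → ℝ} {a b c : ℝ} (hab : a ≤ b)
    (hf : ContinuousOn f (Icc a b)) (ha : f a ≤ c) (hb : c < f b) :
    ∃ τ ∈ Ico a b, f τ = c ∧ ∀ u ∈ Ioc τ b, c < f u := by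
  set E := Icc a b ∩ f ⁻¹' {c}
  have hE : IsCompact E := isCompact_Icc.of_isClosed_subset
    (hf.preimage_isClosed_of_isClosed isClosed_Icc isClosed_singleton) inter_subset_left
  have crossing : ∀ u ∈ Icc a b, f u ≤ c → ∃ v ∈ E, u ≤ v := by
    intro u hu hfu
    obtain ⟨v, hv, hfv⟩ :=
      intermediate_value_Icc hu.2 (hf.mono (Icc_subset_Icc hu.1 le_rfl)) ⟨hfu, hb.le⟩
    exact ⟨v, ⟨⟨hu.1.trans hv.1, hv.2⟩, hfv⟩, hv.1⟩
  obtain ⟨v, hvE, -⟩ := crossing a (left_mem_Icc.2 hab) ha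
  obtain ⟨τ, ⟨hτ, hfτ⟩, hτmax⟩ := hE.exists_isGreatest ⟨v, hvE⟩
  refine ⟨τ, ⟨hτ.1, hτ.2.lt_of_ne ?_⟩, hfτ, fun u hu => ?_⟩
  · rintro rfl
    exact hb.ne' hfτ
  by_contra! hfu
  obtain ⟨w, hwE, huw⟩ := crossing u ⟨hτ.1.trans hu.1.le, hu.2⟩ hfu
  exact (hu.1.trans_le huw).not_ge (hτmax hwE)

theorem le_max_rpow_neg_of_hasDerivAt_le {T a M : ℝ} {x x' : ℝ → ℝ} (ha : 0 < a) (hM : 0 < M)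
    (hderiv : ∀ t ∈ Icc 0 T, HasDerivAt x (x' t) t)
    (hode : ∀ t ∈ Icc 0 T, M ≤ x t → x' t ≤ -a * x t ^ ((a + 1) / a))
    {t : ℝ} (ht : t ∈ Ioc 0 T) : x t ≤ max M (t ^ (-a)) := by
  obtain ⟨ht0, htT⟩ := ht
  have hsub : Icc 0 t ⊆ Icc 0 T := Icc_subset_Icc_right htT
  have hcont : ContinuousOn x (Icc 0 t) := fun s hs =>
    (hderiv s (hsub hs)).continuousAt.continuousWithinAt
  have compare (σ : ℝ) (hσ : σ ∈ Icc 0 t) (hge : ∀ s ∈ Icc σ t, M ≤ x s) :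
      x σ ^ (-a)⁻¹ + (t - σ) ≤ x t ^ (-a)⁻¹ := by
    have hIoo : Ioo σ t ⊆ Icc 0 T := fun s hs => hsub ⟨hσ.1.trans hs.1.le, hs.2.le⟩
    exact rpow_neg_inv_add_sub_le ha hσ.2 (hcont.mono (Icc_subset_Icc_left hσ.1))
      (fun s hs => hM.trans_le (hge s hs)) (fun s hs => hderiv s (hIoo hs))
      fun s hs => hode s (hIoo hs) (hge s (Ioo_subset_Icc_self hs))
  rcases le_or_gt (x t) M with hxt | hxt
  · exact le_max_of_le_left hxt
  by_cases hdrop : ∃ s ∈ Icc 0 t, x s ≤ M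
  · exfalso
    obtain ⟨s, hs, hxs⟩ := hdrop
    obtain ⟨τ, hτ, hxτ, habove⟩ :=
      (hcont.mono (Icc_subset_Icc_left hs.1)).exists_eq_forall_lt_of_le_of_lt hs.2 hxs hxt
    have hgrowth := compare τ ⟨hs.1.trans hτ.1, hτ.2.le⟩ fun u hu => by
      rcases hu.1.eq_or_lt with rfl | hτu
      · exact hxτ.ge
      · exact (habove u ⟨hτu, hu.2⟩).le
    have hdecay : x t ^ (-a)⁻¹ < M ^ (-a)⁻¹ := rpow_lt_rpow_of_neg hM hxt (by simpa using ha)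
    rw [hxτ] at hgrowth
    linarith [hτ.2]
  · push Not at hdrop
    have hgrowth := compare 0 ⟨le_rfl, ht0.le⟩ fun s hs => (hdrop s hs).le
    have hx0 : 0 ≤ x 0 ^ (-a)⁻¹ := rpow_nonneg (hM.trans (hdrop 0 ⟨le_rfl, ht0.le⟩)).le _
    have ht : t ≤ x t ^ (-a)⁻¹ := by linarith
    exact le_max_of_le_right
      ((le_rpow_inv_iff_of_neg ht0 (hM.trans hxt) (neg_neg_of_pos ha)).1 ht)

theorem stmt7_general (T : ℝ) (m : ℕ) (hm : 1 ≤ m) (M : ℝ) (hM : 0 < M)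
    (x x' : ℝ → ℝ)
    (hderiv : ∀ t ∈ Set.Icc (0:ℝ) T, HasDerivAt x (x' t) t)
    (hode : ∀ t ∈ Set.Icc (0:ℝ) T, M ≤ x t →
      x' t ≤ -(2 * (m : ℝ) - 1) * x t ^ (2 * (m : ℝ) / (2 * (m : ℝ) - 1))) :
    ∀ t ∈ Set.Ioc (0:ℝ) T, x t ≤ max M (t ^ (-(2 * (m : ℝ) - 1))) := by
  have ha : 0 < 2 * (m : ℝ) - 1 := by
    have : (1 : ℝ) ≤ m := by exact_mod_cast hm
    linarith
  have hexp : (2 * (m : ℝ) - 1 + 1) / (2 * (m : ℝ) - 1) = 2 * (m : ℝ) / (2 * (m : ℝ) - 1) := by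
    ring
  intro t ht
  exact le_max_rpow_neg_of_hasDerivAt_le ha hM hderiv (fun s hs hMs => hexp ▸ hode s hs hMs) ht

/-- ODE comparison argument from Lemma 4.4 of the paper: if `x : [0,T] → [0,∞)` is
`C¹` (with derivative `x'`) and whenever `x(t) ≥ M` one has
`x'(t) ≤ -(2m-1) x(t)^{2m/(2m-1)}`, then `x(t) ≤ max(M, t^{-(2m-1)})` for `t ∈ (0,T]`. -/
theorem stmt7 (T : ℝ) (hT : 0 < T) (m : ℕ) (hm : 1 ≤ m) (M : ℝ) (hM : 0 < M)
    (x x' : ℝ → ℝ)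
    (hderiv : ∀ t ∈ Set.Icc (0:ℝ) T, HasDerivAt x (x' t) t)
    (hC1 : ContinuousOn x' (Set.Icc (0:ℝ) T))
    (hnonneg : ∀ t ∈ Set.Icc (0:ℝ) T, 0 ≤ x t)
    (hode : ∀ t ∈ Set.Icc (0:ℝ) T, M ≤ x t →
      x' t ≤ -(2 * (m : ℝ) - 1) * x t ^ (2 * (m : ℝ) / (2 * (m : ℝ) - 1))) :
    ∀ t ∈ Set.Ioc (0:ℝ) T, x t ≤ max M (t ^ (-(2 * (m : ℝ) - 1))) :=
  stmt7_general T m hm M hM x x' hderiv hode
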